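/- Let d, μ, L ∈ ℝ with d > 0, 0 < 2μ ≤ d, and L > d. In ℝ² let R = (0, 0), C′ = (0, d), N′ = (L, 0), and let v = μ • (−√3/2, −1/2). Set C = C′ + v and, for t ∈ [0, 1], N = N′ + t • v. Then ⟪C − R, N − R⟫ < 0; that is, the angle ∠NRC is strictly greater than 90°. -/

import Mathlib

/-
In coordinates, `⟪C - R, N - R⟫ = -(√3/2) μ L - (t μ / 2) (d - 2μ)`: the first term is the
(negative) projection of `v` on `N′`, and the second term collects `t ⟪C′, v⟫ + t ‖v‖²`, which is
nonpositive exactly because `2μ ≤ d`.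
-/

open scoped RealInnerProductSpace

/-- The point of `ℝ² = EuclideanSpace ℝ (Fin 2)` with coordinates `(x, y)`. -/
def pt (x y : ℝ) : EuclideanSpace ℝ (Fin 2) := WithLp.toLp 2 ![x, y]

lemma pt_zero_zero : pt 0 0 = 0 := by
  ext i; fin_cases i <;> rfl

lemma inner_pt (a b c e : ℝ) : ⟪pt a b, pt c e⟫ = a * c + b * e := by
  simp [pt, PiLp.inner_apply, Fin.sum_univ_two, mul_comm]

lemma real_inner_add_add_smul {E : Type*} [NormedAddCommGroup E] [InnerProductSpace ℝ E]
    (c n v : E) (t : ℝ) :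
    ⟪c + v, n + t • v⟫ = ⟪c, n⟫ + t * ⟪c, v⟫ + ⟪v, n⟫ + t * ⟪v, v⟫ := by
  simp only [inner_add_left, inner_add_right, real_inner_smul_right]
  ring

/-- Phase-4 claim for destination `D₂`: with `R` at the origin, `C′ = (0, d)`,
`N′ = (L, 0)` with `L > d` and `2μ ≤ d`, after the Commander moves by
`v = μ • (−√3/2, −1/2)` to `C = C′ + v`, at every intermediate position
`N = N′ + t • v` (`t ∈ [0,1]`) of the Number robot the angle `∠NRC` stays
obtuse, i.e. `⟪C − R, N − R⟫ < 0`. -/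
theorem turingmobile_phase4_angle_obtuse
    (d μ L : ℝ) (hd : 0 < d) (hμ : 0 < μ) (hμd : 2 * μ ≤ d) (hL : d < L)
    (R C' N' v C : EuclideanSpace ℝ (Fin 2))
    (hR : R = pt 0 0) (hC' : C' = pt 0 d) (hN' : N' = pt L 0)
    (hv : v = μ • pt (-(Real.sqrt 3) / 2) (-(1 / 2)))
    (hC : C = C' + v) :
    ∀ t ∈ Set.Icc (0 : ℝ) 1, ∀ N : EuclideanSpace ℝ (Fin 2),
      N = N' + t • v → ⟪C - R, N - R⟫ < 0 := by
  rintro t ⟨ht0, -⟩ N rfl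
  subst hR hC' hN' hv hC
  have hsqrt3 : Real.sqrt 3 * Real.sqrt 3 = 3 := Real.mul_self_sqrt (by norm_num)
  have hinner : ⟪pt 0 d + μ • pt (-(Real.sqrt 3) / 2) (-(1 / 2)),
      pt L 0 + t • μ • pt (-(Real.sqrt 3) / 2) (-(1 / 2))⟫
        = -(Real.sqrt 3 / 2) * μ * L - t * μ / 2 * (d - 2 * μ) := by
    rw [real_inner_add_add_smul]
    simp only [real_inner_smul_left, real_inner_smul_right, inner_pt]
    linear_combination t * μ ^ 2 / 4 * hsqrt3
  have hsqrt3_pos : 0 < Real.sqrt 3 := by positivity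
  have hμL : 0 < μ * L := mul_pos hμ (hd.trans hL)
  have hdrift : 0 ≤ t * μ * (d - 2 * μ) := mul_nonneg (mul_nonneg ht0 hμ.le) (by linarith)
  rw [pt_zero_zero, sub_zero, sub_zero, hinner]
  linarith [mul_pos hsqrt3_pos hμL]
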